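/- Let N₀ = { i : Eᵢ = 0 } and suppose N₀ is nonempty and not all of {1,…,N}. Then Var(Î_J) = (1/R) · ∏_{i ∈ N₀} Vᵢ · ∏_{i ∉ N₀} (Vᵢ + Eᵢ²) and Var(Î_M) = (1/R^{|N₀|}) · ∏_{i ∈ N₀} Vᵢ · ∏_{i ∉ N₀} (Vᵢ/R + Eᵢ²). -/

import Mathlib

/-! For independent square-integrable `Zᵢ`, `Var (∏ Zᵢ) = ∏ (Var Zᵢ + (E Zᵢ)²) - (∏ E Zᵢ)²`, and the
last term vanishes as soon as one mean is zero. For `Î_J` this is applied to the product of each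
replicate; the `R` replicates are independent, so averaging them divides the variance by `R`. For
`Î_M` it is applied to the column means `R⁻¹ ∑ᵣ Yᵢʳ`, which are independent with mean `Eᵢ` and
variance `Vᵢ / R`. Independence of the replicates, and of the columns, follows from the joint
independence of the whole array by grouping it into blocks. -/

open MeasureTheory ProbabilityTheory Finset

lemma Finset.prod_add_eq_prod_mul_prod_compl {ι M : Type*} [CommSemiring M] [Fintype ι]
    [DecidableEq ι] {s : Finset ι} {f g : ι → M} (hg : ∀ i ∈ s, g i = 0) :
    ∏ i, (f i + g i) = (∏ i ∈ s, f i) * ∏ i ∈ sᶜ, (f i + g i) := by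
  rw [← prod_mul_prod_compl s]
  congr 1
  exact prod_congr rfl fun i hi ↦ by rw [hg i hi, add_zero]

namespace ProbabilityTheory

variable {Ω ι κ : Type*} [MeasurableSpace Ω] {μ : Measure Ω}

lemma iIndepFun.curry {𝓧 : ι → κ → Type*} [∀ i j, MeasurableSpace (𝓧 i j)]
    {X : (i : ι) → (j : κ) → Ω → 𝓧 i j} (mX : ∀ i j, Measurable (X i j))
    (h : iIndepFun (fun p : ι × κ ↦ X p.1 p.2) μ) :
    iIndepFun (fun i ω j ↦ X i j ω) μ := by
  have := h.isProbabilityMeasure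
  have : ∀ i j, IsProbabilityMeasure (μ.map (X i j)) :=
    fun i j ↦ Measure.isProbabilityMeasure_map (mX i j).aemeasurable
  have hσ : iIndepFun (fun (p : (i : ι) × κ) ω ↦ X p.1 p.2 ω) μ :=
    h.precomp (Equiv.sigmaEquivProd ι κ).injective
  have hcurry : (fun ω i j ↦ X i j ω) =
      MeasurableEquiv.piCurry (fun i (j : κ) ↦ 𝓧 i j) ∘ (fun ω (p : (i : ι) × κ) ↦ X p.1 p.2 ω) := by
    ext; simp [Sigma.curry]
  rw [iIndepFun_iff_map_fun_eq_infinitePi_map (fun i ↦ by fun_prop), hcurry,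
    ← Measure.map_map (by fun_prop) (by fun_prop),
    (iIndepFun_iff_map_fun_eq_infinitePi_map (by fun_prop)).1 hσ,
    Measure.infinitePi_map_piCurry (fun i j ↦ μ.map (X i j))]
  congrm Measure.infinitePi fun i ↦ ?_
  have hi : iIndepFun (X i) μ := h.precomp (g := (i, ·)) (Prod.mk_right_injective i)
  exact ((iIndepFun_iff_map_fun_eq_infinitePi_map (mX i)).1 hi).symm

lemma iIndepFun.integrable_finsetProd {Z : ι → Ω → ℝ} (h : iIndepFun Z μ)
    (hm : ∀ i, Measurable (Z i)) (hZ : ∀ i, Integrable (Z i) μ) (s : Finset ι) :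
    Integrable (∏ i ∈ s, Z i) μ := by
  classical
  have := h.isProbabilityMeasure
  induction s using Finset.induction_on with
  | empty => exact integrable_const 1
  | insert j s hj ih =>
    rw [prod_insert hj, mul_comm]
    exact (h.indepFun_finsetProd_of_notMem hm hj).integrable_mul ih (hZ j)

lemma iIndepFun.memLp_two_fun_prod [Fintype ι] {Z : ι → Ω → ℝ} (h : iIndepFun Z μ)
    (hm : ∀ i, Measurable (Z i)) (hZ : ∀ i, MemLp (Z i) 2 μ) :
    MemLp (fun ω ↦ ∏ i, Z i ω) 2 μ := by
  rw [memLp_two_iff_integrable_sq (by fun_prop)]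
  have hsq := (h.comp (fun _ x ↦ x ^ 2) fun _ ↦ measurable_id.pow_const 2).integrable_finsetProd
    (fun i ↦ (hm i).pow_const 2) (fun i ↦ (hZ i).integrable_sq) univ
  convert hsq using 1
  ext ω
  simp [Finset.prod_apply, prod_pow]

lemma iIndepFun.variance_fun_prod [Fintype ι] {Z : ι → Ω → ℝ} (h : iIndepFun Z μ)
    (hm : ∀ i, Measurable (Z i)) (hZ : ∀ i, MemLp (Z i) 2 μ) :
    variance (fun ω ↦ ∏ i, Z i ω) μ
      = ∏ i, (variance (Z i) μ + μ[Z i] ^ 2) - (∏ i, μ[Z i]) ^ 2 := by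
  have := h.isProbabilityMeasure
  have hsq : ∫ ω, ∏ i, Z i ω ^ 2 ∂μ = ∏ i, ∫ ω, Z i ω ^ 2 ∂μ :=
    (h.comp (fun _ x ↦ x ^ 2) fun _ ↦ measurable_id.pow_const 2).integral_fun_prod_eq_prod_integral
      fun i ↦ ((hm i).pow_const 2).aestronglyMeasurable
  rw [variance_eq_sub (h.memLp_two_fun_prod hm hZ),
    h.integral_fun_prod_eq_prod_integral fun i ↦ (hm i).aestronglyMeasurable]
  simp only [Pi.pow_apply, ← prod_pow, hsq]
  congr 2 with i
  rw [variance_eq_sub (hZ i), Pi.pow_def]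
  ring

lemma integral_average_of_integral_eq [Fintype κ] [Nonempty κ] {Z : κ → Ω → ℝ} {m : ℝ}
    (hZ : ∀ r, Integrable (Z r) μ) (hm : ∀ r, μ[Z r] = m) :
    ∫ ω, (Fintype.card κ : ℝ)⁻¹ * ∑ r, Z r ω ∂μ = m := by
  rw [integral_const_mul, integral_finsetSum _ fun r _ ↦ hZ r]
  simp [hm]

lemma variance_average_of_pairwise_indepFun [Fintype κ]
    {Z : κ → Ω → ℝ} {v : ℝ} (hZ : ∀ r, MemLp (Z r) 2 μ)
    (hind : Pairwise fun r s ↦ IndepFun (Z r) (Z s) μ) (hv : ∀ r, variance (Z r) μ = v) :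
    variance (fun ω ↦ (Fintype.card κ : ℝ)⁻¹ * ∑ r, Z r ω) μ = v / Fintype.card κ := by
  have hsum : variance (fun ω ↦ ∑ r, Z r ω) μ = Fintype.card κ * v := by
    simp_rw [← Finset.sum_apply]
    rw [IndepFun.variance_sum (fun r _ ↦ hZ r) fun r _ s _ hrs ↦ hind hrs]
    simp [hv]
  rw [variance_const_mul, hsum]
  rcases eq_or_ne (Fintype.card κ : ℝ) 0 with h0 | h0
  · simp [h0]
  · field_simp

section Estimators

variable [Fintype ι] [Fintype κ] {Y : ι → κ → Ω → ℝ} {m v : ι → ℝ}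

lemma variance_jointEstimator (hYmeas : ∀ i r, Measurable (Y i r))
    (hYL2 : ∀ i r, MemLp (Y i r) 2 μ) (hYindep : iIndepFun (fun p : ι × κ ↦ Y p.1 p.2) μ)
    (hmean : ∀ i r, μ[Y i r] = m i) (hvar : ∀ i r, variance (Y i r) μ = v i) :
    variance (fun ω ↦ (Fintype.card κ : ℝ)⁻¹ * ∑ r, ∏ i, Y i r ω) μ
      = (∏ i, (v i + m i ^ 2) - (∏ i, m i) ^ 2) / Fintype.card κ := by
  have hrow r : iIndepFun (Y · r) μ := hYindep.precomp (g := (·, r)) (Prod.mk_left_injective r)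
  have hrows : iIndepFun (fun r ω i ↦ Y i r ω) μ :=
    (hYindep.precomp (Equiv.prodComm _ _).injective).curry fun r i ↦ hYmeas i r
  refine variance_average_of_pairwise_indepFun
    (fun r ↦ (hrow r).memLp_two_fun_prod (hYmeas · r) (hYL2 · r))
    (fun r s hrs ↦ (hrows.comp (fun _ x ↦ ∏ i, x i) fun _ ↦ by fun_prop).indepFun hrs)
    fun r ↦ ?_
  simp [(hrow r).variance_fun_prod (hYmeas · r) (hYL2 · r), hmean, hvar]

lemma variance_marginalEstimator [Nonempty κ] (hYmeas : ∀ i r, Measurable (Y i r))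
    (hYL2 : ∀ i r, MemLp (Y i r) 2 μ) (hYindep : iIndepFun (fun p : ι × κ ↦ Y p.1 p.2) μ)
    (hmean : ∀ i r, μ[Y i r] = m i) (hvar : ∀ i r, variance (Y i r) μ = v i) :
    variance (fun ω ↦ ∏ i, (Fintype.card κ : ℝ)⁻¹ * ∑ r, Y i r ω) μ
      = ∏ i, (v i / Fintype.card κ + m i ^ 2) - (∏ i, m i) ^ 2 := by
  have := hYindep.isProbabilityMeasure
  have hcols : iIndepFun (fun i ω r ↦ Y i r ω) μ := hYindep.curry hYmeas
  have hM_indep : iIndepFun (fun i ω ↦ (Fintype.card κ : ℝ)⁻¹ * ∑ r, Y i r ω) μ :=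
    hcols.comp (fun _ x ↦ (Fintype.card κ : ℝ)⁻¹ * ∑ r, x r) fun _ ↦ by fun_prop
  have hM_var i : variance (fun ω ↦ (Fintype.card κ : ℝ)⁻¹ * ∑ r, Y i r ω) μ
      = v i / Fintype.card κ :=
    variance_average_of_pairwise_indepFun (hYL2 i)
      (fun r s hrs ↦ hYindep.indepFun (i := (i, r)) (j := (i, s)) (by simpa using hrs)) (hvar i)
  have hM_mean i : ∫ ω, (Fintype.card κ : ℝ)⁻¹ * ∑ r, Y i r ω ∂μ = m i :=
    integral_average_of_integral_eq (fun r ↦ (hYL2 i r).integrable one_le_two) (hmean i)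
  rw [hM_indep.variance_fun_prod (fun i ↦ by fun_prop)
    (fun i ↦ (memLp_finsetSum _ fun r _ ↦ hYL2 i r).const_mul _)]
  simp only [hM_var, hM_mean]

end Estimators

end ProbabilityTheory

theorem variance_estimators_zero_mean_subset_general
    {Ω : Type*} [MeasurableSpace Ω] (μ : Measure Ω)
    (N R : ℕ) (hR : 1 ≤ R)
    (X : Fin N → Ω → ℝ)
    (hXL2 : ∀ i, MemLp (X i) 2 μ)
    (Y : Fin N → Fin R → Ω → ℝ)
    (hYmeas : ∀ i r, Measurable (Y i r))
    (hYindep : iIndepFun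
      (fun p : Fin N × Fin R => Y p.1 p.2) μ)
    (hYdist : ∀ i r, IdentDistrib (Y i r) (X i) μ μ)
    (N₀ : Finset (Fin N)) (hN₀ : ∀ i, i ∈ N₀ ↔ (∫ ω, X i ω ∂μ) = 0)
    (hne : N₀.Nonempty) :
    variance (fun ω => (R : ℝ)⁻¹ * ∑ r, ∏ i, Y i r ω) μ
      = (R : ℝ)⁻¹ * (∏ i ∈ N₀, variance (X i) μ) *
          ∏ i ∈ N₀ᶜ, (variance (X i) μ + (∫ ω, X i ω ∂μ) ^ 2)
    ∧ variance (fun ω => ∏ i, ((R : ℝ)⁻¹ * ∑ r, Y i r ω)) μ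
      = ((R : ℝ) ^ N₀.card)⁻¹ * (∏ i ∈ N₀, variance (X i) μ) *
          ∏ i ∈ N₀ᶜ, (variance (X i) μ / (R : ℝ) + (∫ ω, X i ω ∂μ) ^ 2) := by
  classical
  have : Nonempty (Fin R) := ⟨⟨0, hR⟩⟩
  have hYL2 i r : MemLp (Y i r) 2 μ := (hYdist i r).symm.memLp_snd (hXL2 i)
  have hYmean i r : μ[Y i r] = μ[X i] := (hYdist i r).integral_eq
  have hYvar i r : variance (Y i r) μ = variance (X i) μ := (hYdist i r).variance_eq
  obtain ⟨i₀, hi₀⟩ := hne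
  have hmean_prod : ∏ i, μ[X i] = 0 := prod_eq_zero (mem_univ i₀) ((hN₀ i₀).1 hi₀)
  have hmean_sq : ∀ i ∈ N₀, μ[X i] ^ 2 = 0 := fun i hi ↦ by simp [(hN₀ i).1 hi]
  have hJ := variance_jointEstimator hYmeas hYL2 hYindep hYmean hYvar
  have hM := variance_marginalEstimator hYmeas hYL2 hYindep hYmean hYvar
  simp only [Fintype.card_fin, hmean_prod] at hJ hM
  constructor
  · rw [hJ, prod_add_eq_prod_mul_prod_compl hmean_sq]
    ring
  · rw [hM, prod_add_eq_prod_mul_prod_compl hmean_sq, prod_div_distrib, prod_const]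
    ring

/-- Let `N₀ = {i : Eᵢ = 0}` be nonempty and not all of `{1,…,N}`. Then
`Var(Î_J) = (1/R) ∏_{i∈N₀} Vᵢ ∏_{i∉N₀} (Vᵢ + Eᵢ²)` and
`Var(Î_M) = (1/R^{|N₀|}) ∏_{i∈N₀} Vᵢ ∏_{i∉N₀} (Vᵢ/R + Eᵢ²)`. -/
theorem variance_estimators_zero_mean_subset
    {Ω : Type*} [MeasurableSpace Ω] (μ : Measure Ω) [IsProbabilityMeasure μ]
    (N R : ℕ) (hN : 1 ≤ N) (hR : 1 ≤ R)
    (X : Fin N → Ω → ℝ)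
    (hXmeas : ∀ i, Measurable (X i))
    (hXL2 : ∀ i, MemLp (X i) 2 μ)
    (hXindep : iIndepFun X μ)
    (Y : Fin N → Fin R → Ω → ℝ)
    (hYmeas : ∀ i r, Measurable (Y i r))
    (hYindep : iIndepFun
      (fun p : Fin N × Fin R => Y p.1 p.2) μ)
    (hYdist : ∀ i r, IdentDistrib (Y i r) (X i) μ μ)
    (N₀ : Finset (Fin N)) (hN₀ : ∀ i, i ∈ N₀ ↔ (∫ ω, X i ω ∂μ) = 0)
    (hne : N₀.Nonempty) (hnuniv : N₀ ≠ Finset.univ) :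
    variance (fun ω => (R : ℝ)⁻¹ * ∑ r, ∏ i, Y i r ω) μ
      = (R : ℝ)⁻¹ * (∏ i ∈ N₀, variance (X i) μ) *
          ∏ i ∈ N₀ᶜ, (variance (X i) μ + (∫ ω, X i ω ∂μ) ^ 2)
    ∧ variance (fun ω => ∏ i, ((R : ℝ)⁻¹ * ∑ r, Y i r ω)) μ
      = ((R : ℝ) ^ N₀.card)⁻¹ * (∏ i ∈ N₀, variance (X i) μ) *
          ∏ i ∈ N₀ᶜ, (variance (X i) μ / (R : ℝ) + (∫ ω, X i ω ∂μ) ^ 2) :=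
  variance_estimators_zero_mean_subset_general μ N R hR X hXL2 Y hYmeas hYindep hYdist N₀ hN₀ hne
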